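/- If X is a Hermitian operator on ℂ^d ⊗ ℂ^d of rank 2 with trace 0 and vanishing partial trace over the first factor, then the partial transpose (Θ ⊗ id)(X) has rank at most d² − d. -/

import Mathlib

open Matrix Kronecker BigOperators
open scoped ComplexOrder

noncomputable def traceNorm {n : Type*} [Fintype n] [DecidableEq n] (X : Matrix n n ℂ) : ℝ :=
  (((Matrix.posSemidef_conjTranspose_mul_self X).1.eigenvectorUnitary : Matrix n n ℂ) *
      Matrix.diagonal ((fun x : ℝ => (x : ℂ)) ∘ (√·) ∘ (Matrix.posSemidef_conjTranspose_mul_self X).1.eigenvalues) *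
      (star (Matrix.posSemidef_conjTranspose_mul_self X).1.eigenvectorUnitary : Matrix n n ℂ)).trace.re

noncomputable def hsNorm {n : Type*} [Fintype n] (X : Matrix n n ℂ) : ℝ :=
  Real.sqrt ((Xᴴ * X).trace.re)

noncomputable def singularValues {n : Type*} [Fintype n] [DecidableEq n] (Y : Matrix n n ℂ) :
    n → ℝ :=
  fun i => Real.sqrt ((Matrix.posSemidef_conjTranspose_mul_self Y).1.eigenvalues i)

/-- Partial transpose on the first tensor factor. -/
def ptransp {d k : ℕ} (X : Matrix (Fin d × Fin k) (Fin d × Fin k) ℂ) :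
    Matrix (Fin d × Fin k) (Fin d × Fin k) ℂ :=
  fun p q => X (q.1, p.2) (p.1, q.2)

/-- Partial trace over the first tensor factor. -/
noncomputable def ptraceH {d k : ℕ} (X : Matrix (Fin d × Fin k) (Fin d × Fin k) ℂ) :
    Matrix (Fin k) (Fin k) ℂ :=
  fun j j' => ∑ i, X (i, j) (i, j')

def vec {d : ℕ} (A : Matrix (Fin d) (Fin d) ℂ) : Fin d × Fin d → ℂ := fun p => A p.1 p.2

/-- Outer product |v⟩⟨w|. -/
def outer {n : Type*} (v w : n → ℂ) : Matrix n n ℂ := fun i j => v i * star (w j)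

/-- The swap operator F(e_i ⊗ e_j) = e_j ⊗ e_i. -/
def swapOp (d : ℕ) : Matrix (Fin d × Fin d) (Fin d × Fin d) ℂ :=
  fun p q => if p.1 = q.2 ∧ p.2 = q.1 then 1 else 0

/-- Blockwise action of Φ ⊗ id on operators on H ⊗ K. -/
def tensorExt {d k : ℕ} (Φ : Matrix (Fin d) (Fin d) ℂ → Matrix (Fin d) (Fin d) ℂ)
    (Z : Matrix (Fin d × Fin k) (Fin d × Fin k) ℂ) :
    Matrix (Fin d × Fin k) (Fin d × Fin k) ℂ :=
  fun p q => Φ (fun a b => Z (a, p.2) (b, q.2)) p.1 q.1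

/-- Diamond norm (stabilized at ancilla dimension d). -/
noncomputable def diamondNorm {d : ℕ}
    (Φ : Matrix (Fin d) (Fin d) ℂ → Matrix (Fin d) (Fin d) ℂ) : ℝ :=
  ⨆ ρ : {ρ : Matrix (Fin d × Fin d) (Fin d × Fin d) ℂ // ρ.PosSemidef ∧ ρ.trace = 1},
    traceNorm (tensorExt Φ ρ.1)

/-!
Write `X = |a⟩⟨a| - |b⟩⟨b|` and reshape `a`, `b` into `d × d` matrices `A`, `B`. The vanishing
partial trace says `Aᴴ A = Bᴴ B`, so `B = U A` for a unitary `U`. If `U t = μ t` and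
`U (A r) = μ (A r)`, then `μ Uᴴ t = t`, and the two rank-one terms of `Θ ⊗ id (X)` agree on the
conjugate of `t ⊗ r`, which therefore lies in the kernel. An eigenbasis `t₁, …, t_d` of `U`, each
paired with some `r_k ≠ 0` for which `A r_k` lies in the same eigenspace (take `r_k ∈ ker A` if
`A` is singular, `r_k = A⁻¹ t_k` otherwise), gives `d` linearly independent kernel vectors.
-/

theorem LinearIndependent.star {R M ι : Type*} [CommRing R] [StarRing R] [AddCommGroup M]
    [Module R M] [StarAddMonoid M] [StarModule R M] {v : ι → M} (hv : LinearIndependent R v) :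
    LinearIndependent R (star v) :=
  hv.map_of_surjective_injectiveₛ (Star.star : R → R) (starAddEquiv : M ≃+ M).toAddMonoidHom
    star_involutive.surjective starAddEquiv.injective fun r m => star_smul r m

theorem LinearIndependent.prod_mul {K ι m n : Type*} [Field K] {x : ι → m → K} {y : ι → n → K}
    (hx : LinearIndependent K x) (hy : ∀ k, y k ≠ 0) :
    LinearIndependent K fun k (p : m × n) => x k p.1 * y k p.2 := by
  rw [linearIndependent_iff'] at hx ⊢
  intro s c hc k hk
  obtain ⟨j, hj⟩ := Function.ne_iff.mp (hy k)
  have hcol : ∀ l ∈ s, c l * y l j = 0 := hx s (fun l => c l * y l j) (funext fun i => by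
    simpa [Finset.sum_apply, mul_assoc, mul_comm (y _ j), mul_left_comm] using
      congrFun hc (i, j))
  exact (mul_eq_zero.mp (hcol k hk)).resolve_right hj

theorem Matrix.rank_add_card_le_of_mulVec_eq_zero {K m ι : Type*} [Field K] [Fintype m]
    [Fintype ι] {Y : Matrix m m K} {v : ι → m → K} (hv : LinearIndependent K v)
    (hker : ∀ k, Y *ᵥ v k = 0) :
    Y.rank + Fintype.card ι ≤ Fintype.card m := by
  have hspan : Submodule.span K (Set.range v) ≤ LinearMap.ker Y.mulVecLin :=
    Submodule.span_le.mpr (Set.range_subset_iff.mpr hker)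
  have hcard := Submodule.finrank_mono hspan
  rw [finrank_span_eq_card hv] at hcard
  have := LinearMap.finrank_range_add_finrank_ker Y.mulVecLin
  rw [Module.finrank_fintype_fun_eq_card] at this
  exact this ▸ Nat.add_le_add_left hcard _

theorem LinearMap.exists_ne_zero_apply_mem {K V : Type*} [Field K] [AddCommGroup V] [Module K V]
    [FiniteDimensional K V] (f : V →ₗ[K] V) {W : Submodule K V} (hW : W ≠ ⊥) :
    ∃ r ≠ 0, f r ∈ W := by
  by_cases hf : Function.Injective f
  · obtain ⟨w, hwW, hw0⟩ := W.exists_mem_ne_zero_of_ne_bot hW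
    obtain ⟨r, rfl⟩ := LinearMap.surjective_of_injective hf w
    exact ⟨r, fun h => hw0 (by rw [h, map_zero]), hwW⟩
  · obtain ⟨r, hr, hr0⟩ := not_forall₂.mp ((injective_iff_map_eq_zero f).not.mp hf)
    exact ⟨r, hr0, hr ▸ W.zero_mem⟩

theorem Matrix.exists_ne_zero_mulVec_mulVec_eq_smul {K n : Type*} [Field K] [Fintype n]
    [DecidableEq n] (A U : Matrix n n K) {t : n → K} (ht0 : t ≠ 0) {μ : K}
    (ht : U *ᵥ t = μ • t) :
    ∃ r ≠ 0, U *ᵥ (A *ᵥ r) = μ • (A *ᵥ r) := by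
  have hW : Module.End.eigenspace (toLin' U) μ ≠ ⊥ :=
    (Submodule.ne_bot_iff _).mpr ⟨t, Module.End.mem_eigenspace_iff.mpr ht, ht0⟩
  obtain ⟨r, hr0, hr⟩ := (toLin' A).exists_ne_zero_apply_mem hW
  exact ⟨r, hr0, Module.End.mem_eigenspace_iff.mp hr⟩

open Module Module.End in
theorem Module.End.exists_basis_eigenvectors_of_iSup_eigenspace_eq_top {K V : Type*} [Field K]
    [AddCommGroup V] [Module K V] [FiniteDimensional K V] {ι : Type*} [Fintype ι]
    (hι : finrank K V = Fintype.card ι) {f : End K V} (hf : ⨆ μ, eigenspace f μ = ⊤) :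
    ∃ b : Basis ι K V, ∀ i, ∃ μ : K, f (b i) = μ • b i := by
  obtain ⟨s, hs, hspan, hli⟩ := exists_linearIndependent K {v : V | ∃ μ : K, f v = μ • v}
  have hspan_top : Submodule.span K s = ⊤ := by
    rw [hspan, eq_top_iff, ← hf]
    exact iSup_le fun μ v hv => Submodule.subset_span ⟨μ, mem_eigenspace_iff.mp hv⟩
  let b := Basis.mk hli (by rw [Subtype.range_coe, hspan_top])
  refine ⟨b.reindex (b.indexEquiv
    ((finBasisOfFinrankEq K V hι).reindex (Fintype.equivFin ι).symm)), fun i => ?_⟩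
  rw [Basis.reindex_apply, Basis.mk_apply]
  exact hs (Subtype.prop _)

open Module.End ComplexStarModule in
theorem ContinuousLinearMap.iSup_eigenspace_eq_top_of_isStarNormal {E : Type*}
    [NormedAddCommGroup E] [InnerProductSpace ℂ E] [FiniteDimensional ℂ E]
    (T : E →L[ℂ] E) [hT : IsStarNormal T] :
    ⨆ μ, eigenspace (T : E →ₗ[ℂ] E) μ = ⊤ := by
  have hcomm : Commute ((ℜ T : E →L[ℂ] E) : E →ₗ[ℂ] E) ((ℑ T : E →L[ℂ] E) : E →ₗ[ℂ] E) :=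
    (isStarNormal_iff_commute_realPart_imaginaryPart.mp hT).map
      ContinuousLinearMap.toLinearMapRingHom
  rw [eq_top_iff, ← LinearMap.IsSymmetric.iSup_iSup_eigenspace_inf_eigenspace_eq_top_of_commute
    (ℜ T).2.isSymmetric (ℑ T).2.isSymmetric hcomm]
  refine iSup₂_le fun α γ x hx => Submodule.mem_iSup_of_mem (α + Complex.I * γ) ?_
  obtain ⟨hα, hγ⟩ := Submodule.mem_inf.mp hx
  rw [mem_eigenspace_iff] at hα hγ ⊢
  conv_lhs => rw [← realPart_add_I_smul_imaginaryPart T]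
  simp only [ContinuousLinearMap.toLinearMap_add, ContinuousLinearMap.toLinearMap_smul,
    LinearMap.add_apply, LinearMap.smul_apply] at hα hγ ⊢
  rw [hα, hγ, add_smul, mul_smul]

theorem Matrix.exists_basis_eigenvectors_of_mem_unitaryGroup {n : Type*} [Fintype n]
    [DecidableEq n] {U : Matrix n n ℂ} (hU : U ∈ unitaryGroup n ℂ) :
    ∃ b : Module.Basis n ℂ (n → ℂ), ∀ i, ∃ μ : ℂ, U *ᵥ b i = μ • b i := by
  let T := toEuclideanCLM (n := n) (𝕜 := ℂ) U
  have : IsStarNormal T := isStarNormal_of_mem_unitary (Unitary.map_mem _ hU)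
  obtain ⟨b, hb⟩ := Module.End.exists_basis_eigenvectors_of_iSup_eigenspace_eq_top
    finrank_euclideanSpace T.iSup_eigenspace_eq_top_of_isStarNormal
  exact ⟨b.map (WithLp.linearEquiv 2 ℂ (n → ℂ)),
    fun i => (hb i).imp fun μ h => congrArg WithLp.ofLp h⟩

theorem LinearIsometryEquiv.exists_apply_eq_of_norm_eq {𝕜 V E : Type*} [RCLike 𝕜]
    [AddCommGroup V] [Module 𝕜 V] [NormedAddCommGroup E] [InnerProductSpace 𝕜 E]
    [FiniteDimensional 𝕜 E] {f g : V →ₗ[𝕜] E} (h : ∀ x, ‖f x‖ = ‖g x‖) :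
    ∃ u : E ≃ₗᵢ[𝕜] E, ∀ x, u (f x) = g x := by
  have hker : LinearMap.ker f ≤ LinearMap.ker g := fun x hx => by
    rwa [LinearMap.mem_ker, ← norm_eq_zero, ← h, norm_eq_zero]
  let L : LinearMap.range f →ₗ[𝕜] E := (LinearMap.ker f).liftQ g hker ∘ₗ f.quotKerEquivRange.symm
  have hL : ∀ x, L ⟨f x, LinearMap.mem_range_self f x⟩ = g x := fun x => by
    simp [L, LinearMap.quotKerEquivRange_symm_apply_image]
  let L' : LinearMap.range f →ₗᵢ[𝕜] E := ⟨L, by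
    rintro ⟨-, x, rfl⟩
    rw [hL, ← h]
    rfl⟩
  refine ⟨L'.extend.toLinearIsometryEquiv rfl, fun x => ?_⟩
  exact (L'.extend_apply ⟨f x, LinearMap.mem_range_self f x⟩).trans (hL x)

theorem ContinuousLinearMap.exists_mem_unitary_eq_mul_of_star_mul_self_eq {𝕜 E : Type*}
    [RCLike 𝕜] [NormedAddCommGroup E] [InnerProductSpace 𝕜 E] [CompleteSpace E]
    [FiniteDimensional 𝕜 E] {F G : E →L[𝕜] E} (h : star F * F = star G * G) :
    ∃ U ∈ unitary (E →L[𝕜] E), G = U * F := by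
  have hnorm : ∀ x, ‖(F : E →ₗ[𝕜] E) x‖ = ‖(G : E →ₗ[𝕜] E) x‖ := fun x => by
    rw [ContinuousLinearMap.coe_coe, ContinuousLinearMap.coe_coe,
      ContinuousLinearMap.apply_norm_eq_sqrt_inner_adjoint_left,
      ContinuousLinearMap.apply_norm_eq_sqrt_inner_adjoint_left]
    simp only [← ContinuousLinearMap.star_eq_adjoint, ← ContinuousLinearMap.mul_def, h]
  obtain ⟨u, hu⟩ := LinearIsometryEquiv.exists_apply_eq_of_norm_eq hnorm
  exact ⟨_, (Unitary.linearIsometryEquiv.symm u).2, ContinuousLinearMap.ext fun x => (hu x).symm⟩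

theorem Matrix.exists_mem_unitaryGroup_eq_mul_of_conjTranspose_mul_self_eq {𝕜 n : Type*}
    [RCLike 𝕜] [Fintype n] [DecidableEq n] {A B : Matrix n n 𝕜} (h : Aᴴ * A = Bᴴ * B) :
    ∃ U ∈ unitaryGroup n 𝕜, B = U * A := by
  let Φ : Matrix n n 𝕜 ≃⋆ₐ[𝕜] _ := toEuclideanCLM
  obtain ⟨U, hU, hBU⟩ := ContinuousLinearMap.exists_mem_unitary_eq_mul_of_star_mul_self_eq
    (F := Φ A) (G := Φ B) (by
      simp only [← map_star Φ, ← map_mul Φ, star_eq_conjTranspose, h])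
  refine ⟨Φ.symm U, Unitary.map_mem _ hU, ?_⟩
  rw [← Φ.symm_apply_apply B, hBU, map_mul, Φ.symm_apply_apply]

theorem Matrix.IsHermitian.eq_sum_smul_outer {n : Type*} [Fintype n] [DecidableEq n]
    {X : Matrix n n ℂ} (hX : X.IsHermitian) :
    X = ∑ k, (hX.eigenvalues k : ℂ) • outer ⇑(hX.eigenvectorBasis k) ⇑(hX.eigenvectorBasis k) := by
  conv_lhs => rw [hX.spectral_theorem]
  ext p q
  simp only [Unitary.conjStarAlgAut_apply, mul_apply, diagonal_apply, mul_ite, mul_zero,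
    Finset.sum_ite_eq', Finset.mem_univ, if_true, Matrix.sum_apply, Matrix.smul_apply, outer,
    star_apply, IsHermitian.eigenvectorUnitary_apply, Function.comp_apply, smul_eq_mul,
    RCLike.star_def, RCLike.ofReal_eq_complex_ofReal]
  exact Finset.sum_congr rfl fun k _ => by ring

theorem outer_smul_ofReal_sqrt {n : Type*} {c : ℝ} (hc : 0 ≤ c) (v : n → ℂ) :
    outer ((√c : ℂ) • v) ((√c : ℂ) • v) = (c : ℂ) • outer v v := by
  ext i j
  simp only [outer, Matrix.smul_apply, Pi.smul_apply, smul_eq_mul, star_mul', Complex.star_def,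
    Complex.conj_ofReal]
  rw [show (c : ℂ) = √c * √c by exact_mod_cast (Real.mul_self_sqrt hc).symm]
  ring

theorem exists_smul_outer_sub_outer_eq {n : Type*} (c : ℝ) (v w : n → ℂ) :
    ∃ a b : n → ℂ, (c : ℂ) • (outer v v - outer w w) = outer a a - outer b b := by
  rcases le_total 0 c with hc | hc
  · exact ⟨(√c : ℂ) • v, (√c : ℂ) • w, by
      rw [smul_sub, outer_smul_ofReal_sqrt hc, outer_smul_ofReal_sqrt hc]⟩
  · refine ⟨(√(-c) : ℂ) • w, (√(-c) : ℂ) • v, ?_⟩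
    rw [outer_smul_ofReal_sqrt (neg_nonneg.mpr hc), outer_smul_ofReal_sqrt (neg_nonneg.mpr hc)]
    simp only [Complex.ofReal_neg, neg_smul, smul_sub]
    abel

theorem Matrix.IsHermitian.exists_eq_outer_sub_outer {n : Type*} [Fintype n] [DecidableEq n]
    {X : Matrix n n ℂ} (hX : X.IsHermitian) (htr : X.trace = 0) (hrk : X.rank = 2) :
    ∃ a b : n → ℂ, X = outer a a - outer b b := by
  set E := hX.eigenvalues
  set u := fun k => ⇑(hX.eigenvectorBasis k)
  have hcard : (Finset.univ.filter fun k => E k ≠ 0).card = 2 := by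
    rw [← hrk, hX.rank_eq_card_non_zero_eigs, Fintype.card_subtype]
  obtain ⟨i, j, hij, hsupp⟩ := Finset.card_eq_two.mp hcard
  have hzero : ∀ k, k ≠ i ∧ k ≠ j → E k = 0 := fun k hk => by
    by_contra h
    have : k ∈ Finset.univ.filter fun k => E k ≠ 0 := Finset.mem_filter.mpr ⟨Finset.mem_univ k, h⟩
    simp [hsupp, hk.1, hk.2] at this
  have hsum : E j = -E i := by
    have := hX.trace_eq_sum_eigenvalues
    rw [htr, Fintype.sum_eq_add i j hij fun k hk => by simp [E, hzero k hk]] at this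
    exact_mod_cast (neg_eq_of_add_eq_zero_right this.symm).symm
  have hX2 : X = (E i : ℂ) • (outer (u i) (u i) - outer (u j) (u j)) := by
    rw [hX.eq_sum_smul_outer, Fintype.sum_eq_add i j hij fun k hk => by simp [E, hzero k hk]]
    simp only [hsum, Complex.ofReal_neg, neg_smul, smul_sub, u, E]
    abel
  rw [hX2]
  exact exists_smul_outer_sub_outer_eq _ _ _

theorem ptraceH_sub {d k : ℕ} (X Y : Matrix (Fin d × Fin k) (Fin d × Fin k) ℂ) :
    ptraceH (X - Y) = ptraceH X - ptraceH Y := by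
  ext j j'
  simp [ptraceH, Finset.sum_sub_distrib]

theorem ptransp_sub {d k : ℕ} (X Y : Matrix (Fin d × Fin k) (Fin d × Fin k) ℂ) :
    ptransp (X - Y) = ptransp X - ptransp Y :=
  rfl

theorem vec_surjective {d : ℕ} : Function.Surjective (_root_.vec (d := d)) :=
  fun a => ⟨Matrix.of fun i j => a (i, j), rfl⟩

theorem ptraceH_outer_vec {d : ℕ} (A B : Matrix (Fin d) (Fin d) ℂ) :
    ptraceH (outer (_root_.vec A) (_root_.vec B)) = (Bᴴ * A)ᵀ := by
  ext j j'
  simp [ptraceH, outer, _root_.vec, Matrix.mul_apply, mul_comm]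

theorem ptransp_outer_vec_mulVec {d : ℕ} (A B : Matrix (Fin d) (Fin d) ℂ) (t r : Fin d → ℂ) :
    ptransp (outer (_root_.vec A) (_root_.vec B)) *ᵥ (fun p => star (t p.1 * r p.2)) =
      fun p => star ((B *ᵥ r) p.1 * (Aᴴ *ᵥ t) p.2) := by
  ext p
  simp only [mulVec, dotProduct, ptransp, outer, _root_.vec, Fintype.sum_prod_type, star_mul',
    conjTranspose_apply, star_sum, Finset.sum_mul, Finset.mul_sum]
  refine Finset.sum_congr rfl fun i _ => Finset.sum_congr rfl fun j _ => ?_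
  simp only [star_star]
  ring

theorem ptransp_outer_sub_outer_mul_mulVec_eq_zero {d : ℕ} {A U : Matrix (Fin d) (Fin d) ℂ}
    (hU : Uᴴ * U = 1) {t r : Fin d → ℂ} {μ : ℂ} (ht : U *ᵥ t = μ • t)
    (hr : U *ᵥ (A *ᵥ r) = μ • (A *ᵥ r)) :
    ptransp (outer (_root_.vec A) (_root_.vec A) - outer (_root_.vec (U * A)) (_root_.vec (U * A)))
      *ᵥ (fun p => star (t p.1 * r p.2)) = 0 := by
  have hUt : μ • (Uᴴ *ᵥ t) = t := by
    rw [← mulVec_smul, ← ht, mulVec_mulVec, hU, one_mulVec]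
  rw [ptransp_sub, sub_mulVec, ptransp_outer_vec_mulVec, ptransp_outer_vec_mulVec, sub_eq_zero]
  ext p
  rw [← mulVec_mulVec, hr, conjTranspose_mul, ← mulVec_mulVec]
  conv_lhs => rw [← hUt]
  simp only [Pi.smul_apply, mulVec_smul, smul_eq_mul]
  ring_nf

theorem rank_two_ptransp_rank_bound {d : ℕ}
    (X : Matrix (Fin d × Fin d) (Fin d × Fin d) ℂ) (hX : X.IsHermitian)
    (htr : X.trace = 0) (hpt : ptraceH X = 0) (hrk : X.rank = 2) :
    (ptransp X).rank ≤ d ^ 2 - d := by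
  obtain ⟨a, b, rfl⟩ := hX.exists_eq_outer_sub_outer htr hrk
  obtain ⟨A, rfl⟩ := vec_surjective a
  obtain ⟨B, rfl⟩ := vec_surjective b
  have hgram : Aᴴ * A = Bᴴ * B := by
    rwa [ptraceH_sub, ptraceH_outer_vec, ptraceH_outer_vec, sub_eq_zero, transpose_inj] at hpt
  obtain ⟨U, hU, rfl⟩ := exists_mem_unitaryGroup_eq_mul_of_conjTranspose_mul_self_eq hgram
  obtain ⟨t, ht⟩ := exists_basis_eigenvectors_of_mem_unitaryGroup hU
  choose μ hμ using ht
  choose r hr0 hr using fun k => exists_ne_zero_mulVec_mulVec_eq_smul A U (t.ne_zero k) (hμ k)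
  have hrank := rank_add_card_le_of_mulVec_eq_zero (t.linearIndependent.prod_mul hr0).star
    fun k => ptransp_outer_sub_outer_mul_mulVec_eq_zero (mem_unitaryGroup_iff'.mp hU) (hμ k) (hr k)
  rw [Fintype.card_fin, Fintype.card_prod, Fintype.card_fin] at hrank
  rw [sq]
  omega
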